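/- The conservation property holds for vector-valued mass inputs: if at each timestep t the mass input is a vector x(t) ∈ ℝ^M with nonnegative entries and the input gate is a left-stochastic K×M matrix I(t), with recurrence m_tot(t) = R(t)·c(t−1) + I(t)·x(t), c(t) = (1 − o(t)) ⊙ m_tot(t), h(t) = o(t) ⊙ m_tot(t), then for every τ ≥ 0, m_c(τ) = m_c(0) + Σ_{t=1}^{τ} Σ_{m=1}^{M} x_m(t) − Σ_{t=1}^{τ} m_h(t). -/

import Mathlib

/-! Mass is conserved step by step: a matrix whose columns sum to one preserves the total of the
vector it acts on, so `Σ mtot(t) = Σ c(t-1) + Σ x(t)`, and the output gate only splits `mtot(t)`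
into the part kept in the cell, `c(t)`, and the part emitted, `h(t)`. Summing these balances over
`t = 1, …, τ` telescopes. -/

open Finset Matrix

theorem Matrix.sum_mulVec_of_sum_col_eq_one {m n α : Type*} [Fintype m] [Fintype n]
    [NonAssocSemiring α] (A : Matrix m n α) (hA : ∀ j, ∑ i, A i j = 1) (v : n → α) :
    ∑ i, (A *ᵥ v) i = ∑ j, v j := by
  simp only [mulVec, dotProduct]
  rw [sum_comm]
  simp only [← sum_mul, hA, one_mul]

theorem Finset.sum_one_sub_mul_add_sum_mul {ι α : Type*} [Ring α] (s : Finset ι) (o a : ι → α) :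
    ∑ i ∈ s, (1 - o i) * a i + ∑ i ∈ s, o i * a i = ∑ i ∈ s, a i := by
  rw [← sum_add_distrib]
  exact sum_congr rfl fun i _ => by rw [← add_mul, sub_add_cancel, one_mul]

theorem eq_add_sum_Icc_of_forall_eq_add {G : Type*} [AddCommMonoid G] (u a : ℕ → G)
    (h : ∀ t, u (t + 1) = u t + a (t + 1)) (τ : ℕ) :
    u τ = u 0 + ∑ t ∈ Icc 1 τ, a t := by
  induction τ with
  | zero => simp
  | succ n ih => rw [h, ih, sum_Icc_succ_top (Nat.le_add_left 1 n), add_assoc]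

theorem mclstm_conservation_vector_input_general
    (K M : ℕ)
    (x : ℕ → Fin M → ℝ)
    (I : ℕ → Matrix (Fin K) (Fin M) ℝ)
    (hI_col : ∀ t m, 1 ≤ t → ∑ k, I t k m = 1)
    (o : ℕ → Fin K → ℝ)
    (R : ℕ → Matrix (Fin K) (Fin K) ℝ)
    (hR_col : ∀ t j, 1 ≤ t → ∑ k, R t k j = 1)
    (c mtot h : ℕ → Fin K → ℝ)
    (hmtot : ∀ t, 1 ≤ t → mtot t = (R t).mulVec (c (t - 1)) + (I t).mulVec (x t))
    (hc : ∀ t, 1 ≤ t → c t = fun k => (1 - o t k) * mtot t k)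
    (hh : ∀ t, 1 ≤ t → h t = fun k => o t k * mtot t k)
    (τ : ℕ) :
    ∑ k, c τ k =
      ∑ k, c 0 k + (∑ t ∈ Finset.Icc 1 τ, ∑ m, x t m)
        - ∑ t ∈ Finset.Icc 1 τ, ∑ k, h t k := by
  have step (t : ℕ) :
      ∑ k, c (t + 1) k = ∑ k, c t k + (∑ m, x (t + 1) m - ∑ k, h (t + 1) k) := by
    have ht : 1 ≤ t + 1 := Nat.le_add_left 1 t
    have balance : ∑ k, c (t + 1) k + ∑ k, h (t + 1) k = ∑ k, c t k + ∑ m, x (t + 1) m := by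
      rw [hc _ ht, hh _ ht, sum_one_sub_mul_add_sum_mul, hmtot _ ht, Nat.add_sub_cancel]
      simp only [Pi.add_apply, sum_add_distrib]
      rw [sum_mulVec_of_sum_col_eq_one _ (hR_col _ · ht),
        sum_mulVec_of_sum_col_eq_one _ (hI_col _ · ht)]
    linear_combination balance
  rw [eq_add_sum_Icc_of_forall_eq_add (fun t => ∑ k, c t k)
    (fun t => ∑ m, x t m - ∑ k, h t k) step τ, sum_sub_distrib, add_sub_assoc]

/-- **MC-LSTM conservation with vector-valued mass inputs:** with mass input vectors
x(t) ∈ ℝ^M (entrywise nonnegative), left-stochastic input gate matrices I(t) ∈ ℝ^{K×M},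
for every τ ≥ 0,
m_c(τ) = m_c(0) + Σ_{t=1}^{τ} Σ_{m=1}^{M} x_m(t) − Σ_{t=1}^{τ} m_h(t). -/
theorem mclstm_conservation_vector_input
    (K M : ℕ)
    (x : ℕ → Fin M → ℝ) (hx : ∀ t m, 1 ≤ t → 0 ≤ x t m)
    (I : ℕ → Matrix (Fin K) (Fin M) ℝ)
    (hI_nonneg : ∀ t k m, 1 ≤ t → 0 ≤ I t k m)
    (hI_col : ∀ t m, 1 ≤ t → ∑ k, I t k m = 1)
    (o : ℕ → Fin K → ℝ)
    (ho : ∀ t k, 1 ≤ t → o t k ∈ Set.Icc (0 : ℝ) 1)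
    (R : ℕ → Matrix (Fin K) (Fin K) ℝ)
    (hR_nonneg : ∀ t k j, 1 ≤ t → 0 ≤ R t k j)
    (hR_col : ∀ t j, 1 ≤ t → ∑ k, R t k j = 1)
    (c mtot h : ℕ → Fin K → ℝ)
    (hc0 : ∀ k, 0 ≤ c 0 k)
    (hmtot : ∀ t, 1 ≤ t → mtot t = (R t).mulVec (c (t - 1)) + (I t).mulVec (x t))
    (hc : ∀ t, 1 ≤ t → c t = fun k => (1 - o t k) * mtot t k)
    (hh : ∀ t, 1 ≤ t → h t = fun k => o t k * mtot t k)
    (τ : ℕ) :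
    ∑ k, c τ k =
      ∑ k, c 0 k + (∑ t ∈ Finset.Icc 1 τ, ∑ m, x t m)
        - ∑ t ∈ Finset.Icc 1 τ, ∑ k, h t k :=
  mclstm_conservation_vector_input_general K M x I hI_col o R hR_col c mtot h hmtot hc hh τ
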